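/- arXiv:2010.03254 — 7 statements merged into one kernel-verified Lean document; each statement's English description precedes it below -/
import Mathlib

section
/- If F is a finite subset of ℤ^d, g : ℤ^d → ℤ is bounded, 𝟙_F * g = k identically for some integer k, and p is a prime with p > (sup g - inf g)·|F|, then 𝟙_{pF} * g = k identically, where pF = {p·f : f ∈ F}. -/
/-!
Work in the group ring `R[G]` with `S = ∑_{f ∈ F} δ_f`. Since `S * g = k` is constant, each further
factor `S` multiplies it by `|F|`, so `S^p * g = k |F|^(p-1)`. In characteristic `p` the Frobenius
gives `S^p = ∑_{f ∈ F} δ_{pf}`, hence `𝟙_{pF} * g ≡ k |F|^(p-1) ≡ k (mod p)` when `p ∤ |F|`.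
Both `𝟙_{pF} * g` and `k = 𝟙_F * g` lie in `[|F| inf g, |F| sup g]`, an interval of length
less than `p`, so they are equal. When `p ∣ |F|` the size condition forces `g` to be constant.
-/

open Finset AddMonoidAlgebra

lemma Int.eq_of_dvd_sub_of_le_of_le {n a b lo hi : ℤ} (h : n ∣ a - b) (hlo_a : lo ≤ a)
    (ha_hi : a ≤ hi) (hlo_b : lo ≤ b) (hb_hi : b ≤ hi) (hn : hi - lo < n) : a = b :=
  sub_eq_zero.1 <| Int.eq_zero_of_abs_lt_dvd h <| abs_sub_lt_iff.2 ⟨by linarith, by linarith⟩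

namespace Dilation

section GroupRing

variable {R G : Type*} [CommRing R] [AddCommGroup G]

instance charP_addMonoidAlgebra (p : ℕ) [CharP R p] : CharP (AddMonoidAlgebra R G) p :=
  charP_of_injective_ringHom (f := singleZeroRingHom (R := R) (M := G)) single_right_injective p

/-- The convolution `(a * g)(x)` of `a ∈ R[G]` with `g`. -/
noncomputable def convAt (g : G → R) (x : G) : AddMonoidAlgebra R G →+ R :=
  liftNC (AddMonoidHom.id R) fun y => g (x - Multiplicative.toAdd y)

variable (g : G → R)

@[simp]
lemma convAt_single (x y : G) (c : R) : convAt g x (single y c) = c * g (x - y) :=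
  liftNC_single _ _ _ _

lemma convAt_mul_single_one (x f : G) (a : AddMonoidAlgebra R G) :
    convAt g x (a * single f 1) = convAt g (x - f) a := by
  induction a using AddMonoidAlgebra.induction_linear with
  | zero => simp
  | add a b ha hb => rw [add_mul, map_add, map_add, ha, hb]
  | single y c => rw [single_mul_single, mul_one, convAt_single, convAt_single, sub_sub, add_comm]

lemma convAt_sum_single_one {ι : Type*} (s : Finset ι) (v : ι → G) (x : G) :
    convAt g x (∑ i ∈ s, single (v i) 1) = ∑ i ∈ s, g (x - v i) := by
  simp

lemma convAt_mul_sum_single_one (F : Finset G) (x : G) (a : AddMonoidAlgebra R G) :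
    convAt g x (a * ∑ f ∈ F, single f 1) = ∑ f ∈ F, convAt g (x - f) a := by
  simp only [mul_sum, map_sum, convAt_mul_single_one]

lemma convAt_indicator_pow_succ {F : Finset G} {k : R} (hk : ∀ x, ∑ f ∈ F, g (x - f) = k)
    (n : ℕ) (x : G) : convAt g x ((∑ f ∈ F, single f 1) ^ (n + 1)) = k * #F ^ n := by
  induction n generalizing x with
  | zero => simpa using hk x
  | succ n ih =>
    rw [pow_succ, convAt_mul_sum_single_one, sum_congr rfl fun f _ => ih (x - f), sum_const,
      nsmul_eq_mul, pow_succ]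
    ring

lemma indicator_pow_char (p : ℕ) [Fact p.Prime] [CharP R p] (F : Finset G) :
    (∑ f ∈ F, single f (1 : R)) ^ p = ∑ f ∈ F, single (p • f) 1 := by
  simp [sum_pow_char, single_pow]

theorem sum_sub_nsmul_eq_of_charP (p : ℕ) [Fact p.Prime] [CharP R p] {F : Finset G} {k : R}
    (hk : ∀ x, ∑ f ∈ F, g (x - f) = k) (x : G) :
    ∑ f ∈ F, g (x - p • f) = k * #F ^ (p - 1) := by
  have hp : p - 1 + 1 = p := Nat.sub_add_cancel (Fact.out : p.Prime).one_lt.le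
  rw [← convAt_sum_single_one, ← indicator_pow_char, ← convAt_indicator_pow_succ g hk, hp]

end GroupRing

variable {G : Type*} [AddCommGroup G]

lemma mul_card_le_sum_le_mul_card {ι : Type*} {u : ι → ℤ} {m M : ℤ} (hm : ∀ i, m ≤ u i)
    (hM : ∀ i, u i ≤ M) (s : Finset ι) : m * #s ≤ ∑ i ∈ s, u i ∧ ∑ i ∈ s, u i ≤ M * #s := by
  constructor
  · simpa [mul_comm] using card_nsmul_le_sum s u m fun i _ => hm i
  · simpa [mul_comm] using sum_le_card_nsmul s u M fun i _ => hM i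

theorem sum_sub_nsmul_eq {g : G → ℤ} {F : Finset G} {k m M : ℤ} {p : ℕ} (hp : p.Prime)
    (hm : ∀ z, m ≤ g z) (hM : ∀ z, g z ≤ M) (hlarge : (M - m) * #F < p)
    (hk : ∀ x, ∑ f ∈ F, g (x - f) = k) (x : G) : ∑ f ∈ F, g (x - p • f) = k := by
  by_cases hpF : (p : ℤ) ∣ #F
  · rw [← hk x]
    refine sum_congr rfl fun f hf => ?_
    have hcard : (p : ℤ) ≤ #F := Int.le_of_dvd (by exact_mod_cast card_pos.2 ⟨f, hf⟩) hpF
    have hMm : M ≤ m := by nlinarith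
    linarith [hm (x - p • f), hM (x - p • f), hm (x - f), hM (x - f)]
  have hcong : (p : ℤ) ∣ ∑ f ∈ F, g (x - p • f) - k := by
    have : Fact p.Prime := ⟨hp⟩
    have hcard : (#F : ZMod p) ≠ 0 := by
      rwa [Ne, ZMod.natCast_eq_zero_iff, ← Int.natCast_dvd_natCast]
    rw [← ZMod.intCast_eq_intCast_iff_dvd_sub]
    push_cast
    rw [sum_sub_nsmul_eq_of_charP (fun z => (g z : ZMod p)) p (k := k)
      (fun y => by simp [← hk y]),
      ZMod.pow_card_sub_one_eq_one hcard, mul_one]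
  obtain ⟨hlo, hhi⟩ :=
    mul_card_le_sum_le_mul_card (fun f => hm (x - p • f)) (fun f => hM (x - p • f)) F
  obtain ⟨hlo', hhi'⟩ :=
    mul_card_le_sum_le_mul_card (fun f => hm (x - f)) (fun f => hM (x - f)) F
  rw [hk x] at hlo' hhi'
  exact Int.eq_of_dvd_sub_of_le_of_le hcong hlo hhi hlo' hhi' (by linarith)

end Dilation

/-- Dilation lemma, prime case: if `𝟙_F * g = k` identically and `p` is a prime with
`p > (sup g - inf g)·|F|`, then `𝟙_{pF} * g = k` identically. -/
theorem stmt_0 (d : ℕ) (F : Finset (Fin d → ℤ)) (g : (Fin d → ℤ) → ℤ)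
    (hbdd_above : BddAbove (Set.range g)) (hbdd_below : BddBelow (Set.range g))
    (k : ℤ) (hk : ∀ x : Fin d → ℤ, ∑ f ∈ F, g (x - f) = k)
    (p : ℕ) (hp : p.Prime)
    (hlarge : (sSup (Set.range g) - sInf (Set.range g)) * F.card < (p : ℤ)) :
    ∀ x : Fin d → ℤ, ∑ f ∈ F.image (fun f => (p : ℤ) • f), g (x - f) = k := by
  intro x
  have hinj : Function.Injective fun f : Fin d → ℤ => (p : ℤ) • f :=
    smul_right_injective _ (Int.natCast_ne_zero.2 hp.ne_zero)
  rw [sum_image fun a _ b _ hab => hinj hab]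
  simp only [natCast_zsmul]
  exact Dilation.sum_sub_nsmul_eq hp (fun z => csInf_le hbdd_below ⟨z, rfl⟩)
    (fun z => le_csSup hbdd_above ⟨z, rfl⟩) hlarge hk x
end

section
/- If F is a finite subset of ℤ^d containing 0, with |F| many elements, and p is a prime, then the p-fold convolution (𝟙_F)^{*p} is congruent to 𝟙_{pF} modulo p, i.e., for every x ∈ ℤ^d, p divides (𝟙_F)^{*p}(x) - 𝟙_{pF}(x). -/
/-!
Reducing coefficients modulo `p` is a ring homomorphism `ℤ[G] → (ZMod p)[G]` whose target has
characteristic `p`. There the Frobenius map is additive, so `(∑ δ_f)^p = ∑ δ_f^p = ∑ δ_{p f}`.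
-/

open AddMonoidAlgebra

namespace AddMonoidAlgebra

variable {R G ι : Type*}

instance charP [AddMonoid G] [Semiring R] (p : ℕ) [CharP R p] : CharP R[G] p :=
  charP_of_injective_ringHom (f := singleZeroRingHom) single_right_injective p

lemma sum_single_pow_char [AddCommMonoid G] [CommSemiring R] (p : ℕ) [Fact p.Prime] [CharP R p]
    (s : Finset ι) (g : ι → G) (r : ι → R) :
    (∑ i ∈ s, single (g i) (r i) : R[G]) ^ p = ∑ i ∈ s, single (p • g i) (r i ^ p) := by
  rw [sum_pow_char]
  simp only [single_pow]

lemma dvd_coeff_sum_single_pow_sub [AddCommMonoid G] (p : ℕ) [Fact p.Prime] (s : Finset ι)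
    (g : ι → G) (r : ι → ℤ) (x : G) :
    (p : ℤ) ∣ ((∑ i ∈ s, single (g i) (r i) : ℤ[G]) ^ p
      - ∑ i ∈ s, single (p • g i) (r i ^ p)).coeff x := by
  rw [← ZMod.intCast_zmod_eq_zero_iff_dvd, ← eq_intCast (Int.castRingHom (ZMod p)),
    ← coeff_mapRingHom, map_sub, map_pow, map_sum, map_sum]
  simp only [mapRingHom_single, map_pow, sum_single_pow_char, sub_self, coeff_zero,
    Finsupp.coe_zero, Pi.zero_apply]

end AddMonoidAlgebra

theorem stmt_2_general (d : ℕ) (F : Finset (Fin d → ℤ))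
    (p : ℕ) (hp : p.Prime) :
    ∀ x : Fin d → ℤ,
      (p : ℤ) ∣ (((∑ f ∈ F, AddMonoidAlgebra.single f (1 : ℤ)
              : AddMonoidAlgebra ℤ (Fin d → ℤ)) ^ p
          - (∑ f ∈ F, AddMonoidAlgebra.single ((p : ℤ) • f) (1 : ℤ)
              : AddMonoidAlgebra ℤ (Fin d → ℤ))).coeff x) := by
  have := Fact.mk hp
  intro x
  simpa only [one_pow, natCast_zsmul, id_eq] using
    dvd_coeff_sum_single_pow_sub p F id (fun _ ↦ 1) x

/-- For a finite `F ⊂ ℤ^d` with `0 ∈ F` and a prime `p`, the `p`-fold convolution power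
`(𝟙_F)^{*p}` is congruent to `𝟙_{pF}` modulo `p`, pointwise.  Here the indicator
`𝟙_F` is viewed as the element `∑_{f ∈ F} δ_f` of the convolution ring
`AddMonoidAlgebra ℤ (ℤ^d)`, and `pF = {p·f : f ∈ F}`. -/
theorem stmt_2 (d : ℕ) (F : Finset (Fin d → ℤ)) (h0 : 0 ∈ F)
    (p : ℕ) (hp : p.Prime) :
    ∀ x : Fin d → ℤ,
      (p : ℤ) ∣ (((∑ f ∈ F, AddMonoidAlgebra.single f (1 : ℤ)
              : AddMonoidAlgebra ℤ (Fin d → ℤ)) ^ p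
          - (∑ f ∈ F, AddMonoidAlgebra.single ((p : ℤ) • f) (1 : ℤ)
              : AddMonoidAlgebra ℤ (Fin d → ℤ))).coeff x) :=
  stmt_2_general d F p hp
end

section
/- Let F ⊂ ℤ be finite with 0 ∈ F, and let A ⊂ ℤ be such that 𝟙_F * 𝟙_A is ℓℤ-periodic for some ℓ ≥ 1. Let q be the least common multiple of ℓ and all primes ≤ 2|F|, and let n be the least common multiple of |f| over f ∈ F \ {0}. Then A is qn·ℤ-periodic, i.e., A + qn = A. -/
/-!
Put `a = 𝟙_A` and `b = a (· + ℓ) - a`, so that `∑_{f ∈ F} b (x - f) = 0` for all `x` and `b` takes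
the values `-1, 0, 1`. This recurrence determines `b` from any `max F - min F` consecutive values,
in both directions, and there are finitely many such windows; hence `b` is periodic. Over one period
the discrete Fourier transform turns the recurrence into `F̂(ω) b̂(ω) = 0`, with
`F̂(ω) = ∑_{f ∈ F} ω ^ f`, so `b` is `N`-periodic as soon as `ω ^ N = 1` for every root of unity `ω`
with `F̂(ω) = 0`.

Let `ω` have order `p ^ (k + 1) * m` with `p ∤ m`. Then `ω = ζ η` where `ζ` has order `p ^ (k + 1)`
and `η` lies in `K = ℚ(ω ^ p ^ (k + 1))`. Since the orders are coprime, `Φ_{p^(k+1)}` is still the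
minimal polynomial of `ζ` over `K`. Reduce the exponents of `∑_{f ∈ F} η ^ f X ^ f` modulo
`p ^ (k + 1)`. The result is divisible by `Φ_{p^(k+1)} = ∑_{i < p} X ^ (i p ^ k)` and has degree
`< p ^ (k + 1)`, so its coefficients at `i p ^ k` for `i < p` are all equal. If they vanish, the
class of `0` contains a second element of `F`, a nonzero multiple of `p ^ (k + 1)`. Otherwise all
`p` classes `i p ^ k` meet `F`, so `p ≤ |F|` and some nonzero `f ∈ F` is a multiple of `p ^ k`.
Either way `p ^ (k + 1) ∣ q n`, hence `ω ^ (q n) = 1`.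

Finally `a (· + q n) - a` is `ℓ`-periodic, hence `q n`-periodic, and a `{0, 1}`-valued function
whose increments over `q n` are `q n`-periodic is itself `q n`-periodic.
-/

open Polynomial IntermediateField Function

section Recurrence

variable {G : Type*} [AddCommGroup G]

theorem forall_ge_eq_zero_of_sum_comp_sub_eq_zero {F : Finset ℤ} {g : ℤ → G} {a d u : ℤ}
    (ha : a ∈ F) (hF : ∀ f ∈ F, a ≤ f ∧ f ≤ a + d) (hg : ∀ x, ∑ f ∈ F, g (x - f) = 0)
    (hu : ∀ x, u ≤ x → x < u + d → g x = 0) : ∀ x, u ≤ x → g x = 0 := by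
  suffices ∀ t : ℕ, ∀ x, u ≤ x → x < u + t → g x = 0 from
    fun x hx => this (x - u + 1).toNat x hx (by omega)
  intro t
  induction t with
  | zero => intro x h1 h2; omega
  | succ t ih =>
    intro x hux hxt
    rcases lt_or_ge x (u + t) with hx | hx
    · exact ih x hux hx
    rcases lt_or_ge x (u + d) with hd | hd
    · exact hu x hux hd
    have h := hg (x + a)
    rwa [← Finset.add_sum_erase F _ ha, add_sub_cancel_right, Finset.sum_eq_zero, add_zero] at h
    intro f hf
    obtain ⟨hfa, hfF⟩ := Finset.mem_erase.mp hf
    have := hF f hfF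
    exact ih _ (by omega) (by omega)

theorem eq_zero_of_sum_comp_sub_eq_zero {F : Finset ℤ} (hF : F.Nonempty) {g : ℤ → G}
    (hg : ∀ x, ∑ f ∈ F, g (x - f) = 0) {u : ℤ}
    (hu : ∀ x, u ≤ x → x < u + (F.max' hF - F.min' hF) → g x = 0) : g = 0 := by
  have hbounds : ∀ f ∈ F, F.min' hF ≤ f ∧ f ≤ F.max' hF :=
    fun f hf => ⟨F.min'_le f hf, F.le_max' f hf⟩
  have hright := forall_ge_eq_zero_of_sum_comp_sub_eq_zero (F.min'_mem hF)
    (fun f hf => by have := hbounds f hf; omega) hg hu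
  -- the same argument for the reflection `x ↦ g (-x)`, which satisfies the recurrence for `-F`
  have hleft := forall_ge_eq_zero_of_sum_comp_sub_eq_zero (F := F.image Neg.neg)
    (g := fun x => g (-x)) (d := F.max' hF - F.min' hF) (u := -(u + (F.max' hF - F.min' hF)) + 1)
    (Finset.mem_image_of_mem _ (F.max'_mem hF))
    (fun f hf => by
      obtain ⟨f', hf', rfl⟩ := Finset.mem_image.mp hf
      have := hbounds f' hf'; constructor <;> omega)
    (fun x => by
      rw [Finset.sum_image fun _ _ _ _ h => neg_injective h, ← hg (-x)]
      exact Finset.sum_congr rfl fun f _ => congrArg g (by ring))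
    (fun x h1 h2 => hu _ (by omega) (by omega))
  funext x
  rcases le_or_gt u x with h | h
  · exact hright x h
  · have := F.min'_le _ (F.max'_mem hF)
    simpa using hleft (-x) (by omega)

theorem exists_periodic_of_sum_comp_sub_eq_zero {F : Finset ℤ} (hF : F.Nonempty) {b : ℤ → G}
    (hb : ∀ x, ∑ f ∈ F, b (x - f) = 0) (hfin : (Set.range b).Finite) :
    ∃ T : ℕ, 0 < T ∧ Periodic b T := by
  set d := (F.max' hF - F.min' hF).toNat
  obtain ⟨x, y, hxy, hW⟩ := Set.Finite.exists_lt_map_eq_of_forall_mem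
    (f := fun x : ℕ => fun i : Fin d => b (x + i)) (t := Set.univ.pi fun _ => Set.range b)
    (fun x => by simp) (Set.Finite.pi fun _ => hfin)
  suffices h : (fun z => b (z + (y - x : ℕ)) - b z) = 0 from
    ⟨y - x, by omega, fun z => sub_eq_zero.mp (congrFun h z)⟩
  refine eq_zero_of_sum_comp_sub_eq_zero hF (fun z => ?_) (u := x) fun z hz1 hz2 => ?_
  · simp only [Finset.sum_sub_distrib, sub_add_eq_add_sub, hb, sub_self]
  · have hi : (z - x).toNat < d := by omega
    have := congrFun hW ⟨_, hi⟩
    simp only at this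
    rw [Int.toNat_of_nonneg (by omega)] at this
    rw [show z + ((y - x : ℕ) : ℤ) = y + (z - x) by push_cast [hxy.le]; ring, ← this]
    simp
end Recurrence

theorem Function.Periodic.sum_range_add_one {M : Type*} [AddCancelCommMonoid M] {h : ℤ → M}
    {T : ℕ} (hh : Periodic h T) :
    ∑ x ∈ Finset.range T, h (x + 1) = ∑ x ∈ Finset.range T, h x := by
  have h1 := Finset.sum_range_succ' (fun x : ℕ => h x) T
  rw [Finset.sum_range_succ, show h T = h 0 by simpa using hh 0] at h1
  push_cast at h1
  exact add_right_cancel h1.symm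

theorem Function.Periodic.sum_range_add {M : Type*} [AddCancelCommMonoid M] {h : ℤ → M}
    {T : ℕ} (hh : Periodic h T) (c : ℤ) :
    ∑ x ∈ Finset.range T, h (x + c) = ∑ x ∈ Finset.range T, h x := by
  have h1 : Periodic (fun c : ℤ => ∑ x ∈ Finset.range T, h (x + c)) 1 := fun c => by
    simp only [← (hh.add_const c).sum_range_add_one, add_right_comm _ (1 : ℤ) c, add_assoc]
  simpa using h1.int_mul_eq c

noncomputable def fourierSum (T : ℕ) (g : ℤ → ℂ) (ω : ℂ) : ℂ :=
  ∑ x ∈ Finset.range T, g x * ω ^ (x : ℤ)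

theorem fourierSum_comp_add {g : ℤ → ℂ} {T : ℕ} (hg : Periodic g T) {ω : ℂ} (hω0 : ω ≠ 0)
    (hω : ω ^ T = 1) (c : ℤ) :
    fourierSum T (fun x => g (x + c)) ω = ω ^ (-c) * fourierSum T g ω := by
  have hper : Periodic (fun x => g x * ω ^ x) T := fun x => by
    simp only [hg x, zpow_add₀ hω0, zpow_natCast, hω, mul_one]
  rw [fourierSum, fourierSum, ← hper.sum_range_add c, Finset.mul_sum]
  refine Finset.sum_congr rfl fun x _ => ?_
  rw [zpow_add₀ hω0, zpow_neg]
  field_simp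

theorem eq_zero_of_fourierSum_eq_zero {g : ℤ → ℂ} {T : ℕ} (hT : 0 < T) (hg : Periodic g T)
    (h : ∀ ω : ℂ, ω ^ T = 1 → fourierSum T g ω = 0) : g = 0 := by
  set P : ℂ[X] := ∑ x ∈ Finset.range T, monomial x (g x)
  have hP : P = 0 := by
    refine eq_zero_of_natDegree_lt_card_of_eval_eq_zero' P (nthRootsFinset T (1 : ℂ))
      (fun ω hω => ?_) ?_
    · rw [← h ω ((mem_nthRootsFinset hT 1).mp hω), fourierSum, eval_finsetSum]
      simp [eval_monomial, mul_comm]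
    · rw [(Complex.isPrimitiveRoot_exp T hT.ne').card_nthRootsFinset]
      refine lt_of_le_of_lt (natDegree_sum_le_of_forall_le _ _ (n := T - 1) fun x hx => ?_) ?_
      · exact (natDegree_monomial_le _).trans (by have := Finset.mem_range.mp hx; omega)
      · omega
  funext x
  have hmod : 0 ≤ x % T := Int.emod_nonneg x (by omega)
  have hlt : (x % T).toNat < T := by have := Int.emod_lt_of_pos x (by omega : (0 : ℤ) < T); omega
  have hcoeff := congrArg (coeff · (x % T).toNat) hP
  simp only [P, finsetSum_coeff, coeff_monomial, Finset.sum_ite_eq', Finset.mem_range, hlt,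
    if_true, Int.toNat_of_nonneg hmod, coeff_zero] at hcoeff
  rw [Pi.zero_apply, ← hcoeff, Int.emod_def, mul_comm]
  simpa using (hg.sub_int_mul_eq (x / T)).symm

theorem periodic_of_sum_comp_sub_eq_zero {F : Finset ℤ} {b : ℤ → ℂ} {T N : ℕ} (hT : 0 < T)
    (hb : Periodic b T) (hconv : ∀ x, ∑ f ∈ F, b (x - f) = 0)
    (hN : ∀ ω : ℂ, ω ^ T = 1 → ∑ f ∈ F, ω ^ f = 0 → ω ^ N = 1) : Periodic b N := by
  set e : ℤ → ℂ := fun x => b (x + N) - b x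
  suffices h : e = 0 from fun x => sub_eq_zero.mp (congrFun h x)
  refine eq_zero_of_fourierSum_eq_zero hT (fun x => ?_) fun ω hω => ?_
  · simp only [e, add_right_comm x (T : ℤ), hb _]
  have hω0 : ω ≠ 0 := by rintro rfl; simp [zero_pow hT.ne'] at hω
  have hprod : (∑ f ∈ F, ω ^ f) * fourierSum T b ω = 0 := by
    calc _ = ∑ f ∈ F, fourierSum T (fun x => b (x + -f)) ω := by
            rw [Finset.sum_mul]
            exact Finset.sum_congr rfl fun f _ => by rw [fourierSum_comp_add hb hω0 hω, neg_neg]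
      _ = fourierSum T (fun x => ∑ f ∈ F, b (x - f)) ω := by
            simp only [fourierSum, Finset.sum_mul, ← sub_eq_add_neg]
            exact Finset.sum_comm
      _ = 0 := by simp [hconv, fourierSum]
  have he : fourierSum T e ω = (ω ^ (-(N : ℤ)) - 1) * fourierSum T b ω := by
    rw [sub_mul, one_mul, ← fourierSum_comp_add hb hω0 hω]
    simp only [fourierSum, e, sub_mul, Finset.sum_sub_distrib]
  rw [he]
  rcases mul_eq_zero.mp hprod with hF | hB
  · rw [zpow_neg, zpow_natCast, hN ω hω hF, inv_one, sub_self, zero_mul]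
  · rw [hB, mul_zero]

theorem zpow_emod_of_pow_eq_one {G₀ : Type*} [GroupWithZero G₀] {ζ : G₀} {M : ℕ}
    (h : ζ ^ M = 1) (f : ℤ) : ζ ^ (f % M) = ζ ^ f := by
  rcases eq_or_ne M 0 with rfl | hM
  · simp
  have hζ : ζ ≠ 0 := by rintro rfl; simp [zero_pow hM] at h
  conv_rhs => rw [← Int.emod_add_mul_ediv f M, zpow_add₀ hζ, zpow_mul, zpow_natCast, h, one_zpow,
    mul_one]

theorem coeff_geom_sum_mul {R : Type*} [Semiring R] {G : R[X]} {d p i : ℕ}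
    (hG : G.natDegree < d) (hi : i < p) :
    ((∑ j ∈ Finset.range p, (X ^ d) ^ j) * G).coeff (i * d) = G.coeff 0 := by
  rw [Finset.sum_mul, finsetSum_coeff, Finset.sum_eq_single_of_mem i (Finset.mem_range.2 hi)]
  · rw [← pow_mul, coeff_X_pow_mul', if_pos (by rw [mul_comm]), mul_comm, Nat.sub_self]
  · intro j _ hji
    rw [← pow_mul, coeff_X_pow_mul']
    split_ifs with h
    · have hji : j < i :=
        (Nat.le_of_mul_le_mul_right (c := d) (by linarith [mul_comm d j]) (by omega)).lt_of_ne hji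
      apply coeff_eq_zero_of_natDegree_lt
      calc G.natDegree < d := hG
        _ ≤ i * d - d * j := by
          rw [mul_comm d j, ← Nat.sub_mul]; exact Nat.le_mul_of_pos_left _ (by omega)
    · rfl

theorem coeff_mul_prime_pow_eq_coeff_zero_of_cyclotomic_dvd {R : Type*} [CommRing R]
    [Nontrivial R] {p k : ℕ} (hp : p.Prime) {P : R[X]} (hdvd : cyclotomic (p ^ (k + 1)) R ∣ P)
    (hdeg : P.natDegree < p ^ (k + 1)) {i : ℕ} (hi : i < p) :
    P.coeff (i * p ^ k) = P.coeff 0 := by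
  obtain ⟨G, rfl⟩ := hdvd
  have hG : G.natDegree < p ^ k := by
    rcases eq_or_ne G 0 with rfl | hG0
    · simpa using pow_pos hp.pos k
    rw [(cyclotomic.monic _ R).natDegree_mul' hG0, natDegree_cyclotomic,
      Nat.totient_prime_pow_succ hp, pow_succ] at hdeg
    have : p ^ k * (p - 1) + p ^ k = p ^ k * p := by
      rw [← Nat.mul_succ, Nat.succ_eq_add_one, Nat.sub_add_cancel hp.one_le]
    omega
  have h0 := coeff_geom_sum_mul hG hp.pos (i := 0)
  rw [zero_mul] at h0
  rw [cyclotomic_prime_pow_eq_geom_sum hp, coeff_geom_sum_mul hG hi, h0]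

theorem pow_eq_one_of_minpoly_eq_cyclotomic {K L : Type*} [Field K] [Field L] [Algebra K L]
    {n : ℕ} {ζ : L} (hζ : minpoly K ζ = cyclotomic n K) : ζ ^ n = 1 := by
  obtain ⟨Q, hQ⟩ := cyclotomic.dvd_X_pow_sub_one n K
  have h := congrArg (aeval ζ) hQ
  rw [map_mul, ← hζ, minpoly.aeval, zero_mul, map_sub, map_pow, aeval_X, map_one] at h
  exact sub_eq_zero.mp h

theorem minpoly_adjoin_eq_cyclotomic {L : Type*} [Field L] [CharZero L] {ζ η : L} {a b : ℕ}
    (ha : 0 < a) (hb : 0 < b) (hζ : IsPrimitiveRoot ζ a) (hη : IsPrimitiveRoot η b)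
    (hab : a.Coprime b) : minpoly ℚ⟮η⟯ ζ = cyclotomic a ℚ⟮η⟯ := by
  have hζint : IsIntegral ℚ⟮η⟯ ζ := (hζ.isIntegral ha).tower_top
  have hηint : IsIntegral ℚ η := (hη.isIntegral hb).tower_top
  refine (eq_of_monic_of_dvd_of_natDegree_le (minpoly.monic hζint) (cyclotomic.monic a _)
    (minpoly.dvd _ _ ?_) ?_).symm
  · rw [aeval_def, eval₂_eq_eval_map, map_cyclotomic]
    exact hζ.isRoot_cyclotomic ha
  -- `φ a * φ b = φ (a * b) ≤ [ℚ⟮η⟯⟮ζ⟯ : ℚ] = φ b * deg (minpoly ℚ⟮η⟯ ζ)`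
  have := adjoin.finiteDimensional hζint
  have := adjoin.finiteDimensional hηint
  have : FiniteDimensional ℚ ℚ⟮η⟯⟮ζ⟯ := Module.Finite.trans ℚ⟮η⟯ _
  have hζ' : IsPrimitiveRoot (AdjoinSimple.gen ℚ⟮η⟯ ζ) a :=
    IsPrimitiveRoot.coe_submonoidClass_iff.mp hζ
  have hη' : IsPrimitiveRoot (algebraMap ℚ⟮η⟯ ℚ⟮η⟯⟮ζ⟯ (AdjoinSimple.gen ℚ η)) b :=
    (IsPrimitiveRoot.coe_submonoidClass_iff.mp hη).map_of_injective
      (algebraMap ℚ⟮η⟯ ℚ⟮η⟯⟮ζ⟯).injective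
  have hdeg := hζ'.lcm_totient_le_finrank hη' (cyclotomic.irreducible_rat (Nat.lcm_pos ha hb))
  have htower := Module.finrank_mul_finrank ℚ ℚ⟮η⟯ ℚ⟮η⟯⟮ζ⟯
  rw [← htower, hab.lcm_eq_mul, Nat.totient_mul hab,
    adjoin.finrank hηint, adjoin.finrank hζint, ← cyclotomic_eq_minpoly_rat hη hb,
    natDegree_cyclotomic] at hdeg
  rw [natDegree_cyclotomic]
  exact Nat.le_of_mul_le_mul_right (by linarith) (Nat.totient_pos.2 hb)

section ResiduePoly

variable {K : Type*} [Field K] {M : ℕ} (F : Finset ℤ) (c : ℤ → K)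

noncomputable def residuePoly (M : ℕ) : K[X] := ∑ f ∈ F, C (c f) * X ^ (f % M).toNat

theorem coeff_residuePoly [DecidableEq ℤ] (hM : 0 < M) (e : ℕ) :
    (residuePoly F c M).coeff e = ∑ f ∈ F with f % (M : ℤ) = (e : ℤ), c f := by
  simp only [residuePoly, finsetSum_coeff, coeff_C_mul_X_pow, Finset.sum_filter]
  refine Finset.sum_congr rfl fun f _ => if_congr ?_ rfl rfl
  have := Int.emod_nonneg f (by omega : (M : ℤ) ≠ 0)
  omega

theorem natDegree_residuePoly_lt (hM : 0 < M) : (residuePoly F c M).natDegree < M := by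
  refine lt_of_le_of_lt (natDegree_sum_le_of_forall_le _ _ (n := M - 1) fun f _ => ?_) (by omega)
  refine (natDegree_C_mul_X_pow_le _ _).trans ?_
  have := Int.emod_lt_of_pos f (by omega : (0 : ℤ) < M)
  omega

theorem aeval_residuePoly {L : Type*} [Field L] [Algebra K L] (hM : 0 < M) {ζ : L}
    (hζ : ζ ^ M = 1) :
    aeval ζ (residuePoly F c M) = ∑ f ∈ F, algebraMap K L (c f) * ζ ^ f := by
  simp only [residuePoly, map_sum, map_mul, aeval_C, map_pow, aeval_X]
  refine Finset.sum_congr rfl fun f _ => ?_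
  rw [← zpow_natCast, Int.toNat_of_nonneg (Int.emod_nonneg _ (by omega)),
    zpow_emod_of_pow_eq_one hζ]

end ResiduePoly

theorem exists_dvd_of_sum_mul_zpow_eq_zero {K L : Type*} [Field K] [Field L] [Algebra K L]
    {p k : ℕ} (hp : p.Prime) {ζ : L} (hζ : minpoly K ζ = cyclotomic (p ^ (k + 1)) K)
    {F : Finset ℤ} (h0 : 0 ∈ F) {c : ℤ → K} (hc : c 0 ≠ 0)
    (hsum : ∑ f ∈ F, algebraMap K L (c f) * ζ ^ f = 0) :
    (∃ f ∈ F, f ≠ 0 ∧ (p : ℤ) ^ k ∣ f) ∧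
      (F.card < p → ∃ f ∈ F, f ≠ 0 ∧ (p : ℤ) ^ (k + 1) ∣ f) := by
  classical
  set M := p ^ (k + 1)
  have hM : 0 < M := pow_pos hp.pos _
  set P := residuePoly F c M
  have hdvd : cyclotomic M K ∣ P := hζ ▸ minpoly.dvd K ζ (by
    rw [aeval_residuePoly F c hM (pow_eq_one_of_minpoly_eq_cyclotomic hζ), hsum])
  by_cases hP0 : P.coeff 0 = 0
  · -- the class of `0` has coefficient sum `0` but contains `0`, with `c 0 ≠ 0`
    obtain ⟨f, hf, hfM, hf0⟩ : ∃ f ∈ F, f % M = 0 ∧ f ≠ 0 := by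
      by_contra! h
      refine hc ?_
      rw [← hP0, coeff_residuePoly F c hM, Finset.sum_eq_single_of_mem 0 (by simp [h0])]
      intro f hf hf0
      obtain ⟨hf, hfM⟩ := Finset.mem_filter.mp hf
      exact absurd (h f hf (by exact_mod_cast hfM)) hf0
    have hMf : (p : ℤ) ^ (k + 1) ∣ f := by exact_mod_cast Int.dvd_of_emod_eq_zero hfM
    exact ⟨⟨f, hf, hf0, (pow_dvd_pow _ k.le_succ).trans hMf⟩, fun _ => ⟨f, hf, hf0, hMf⟩⟩
  have hne : ∀ i < p, ∃ f ∈ F, f % M = (i * p ^ k : ℕ) := fun i hi => by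
    rw [← coeff_mul_prime_pow_eq_coeff_zero_of_cyclotomic_dvd hp hdvd
      (natDegree_residuePoly_lt F c hM) hi, coeff_residuePoly F c hM] at hP0
    obtain ⟨f, hf, -⟩ := Finset.exists_ne_zero_of_sum_ne_zero hP0
    exact ⟨f, (Finset.mem_filter.mp hf).1, (Finset.mem_filter.mp hf).2⟩
  refine ⟨?_, fun hlt => absurd ?_ hlt.not_ge⟩
  · obtain ⟨f, hf, hfM⟩ := hne 1 hp.one_lt
    rw [one_mul] at hfM
    have hpk : ((p ^ k : ℕ) : ℤ) ∣ M := by exact_mod_cast pow_dvd_pow p k.le_succ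
    refine ⟨f, hf, ?_, ?_⟩
    · rintro rfl
      simp only [Int.zero_emod, Nat.cast_pow] at hfM
      exact pow_ne_zero k (Int.natCast_ne_zero.mpr hp.ne_zero) hfM.symm
    · have := Int.dvd_of_emod_eq_zero (by rw [← Int.emod_emod_of_dvd f hpk, hfM, Int.emod_self])
      exact_mod_cast this
  · calc p = ((Finset.range p).image fun i => ((i * p ^ k : ℕ) : ℤ)).card := by
          rw [Finset.card_image_of_injective _ fun i j h => mul_left_injective₀
            (pow_ne_zero k hp.ne_zero) (Nat.cast_injective h), Finset.card_range]
      _ ≤ (F.image (· % (M : ℤ))).card := Finset.card_le_card fun e he => by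
          obtain ⟨i, hi, rfl⟩ := Finset.mem_image.mp he
          obtain ⟨f, hf, hfM⟩ := hne i (Finset.mem_range.mp hi)
          exact Finset.mem_image.mpr ⟨f, hf, hfM⟩
      _ ≤ F.card := Finset.card_image_le

theorem exists_dvd_of_sum_zpow_eq_zero {L : Type*} [Field L] [CharZero L] {ω : L} {p k m : ℕ}
    (hp : p.Prime) (hm : ¬ p ∣ m) (hω : IsPrimitiveRoot ω (p ^ (k + 1) * m))
    {F : Finset ℤ} (h0 : 0 ∈ F) (hsum : ∑ f ∈ F, ω ^ f = 0) :
    (∃ f ∈ F, f ≠ 0 ∧ (p : ℤ) ^ k ∣ f) ∧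
      (F.card < p → ∃ f ∈ F, f ≠ 0 ∧ (p : ℤ) ^ (k + 1) ∣ f) := by
  set M := p ^ (k + 1)
  have hm0 : 0 < m := Nat.pos_of_ne_zero (by rintro rfl; exact hm (dvd_zero p))
  have hM0 : 0 < M := pow_pos hp.pos _
  have hcop : M.Coprime m := Nat.Coprime.pow_left _ (hp.coprime_iff_not_dvd.mpr hm)
  obtain ⟨u, v, huv⟩ : IsCoprime (m : ℤ) M := Nat.isCoprime_iff_coprime.mpr hcop.symm
  have hη : IsPrimitiveRoot (ω ^ M) m := hω.pow (by positivity) rfl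
  have hζ : IsPrimitiveRoot ((ω ^ m) ^ u) M :=
    (hω.pow (by positivity) (mul_comm _ _)).zpow_of_gcd_eq_one u
      (Int.isCoprime_iff_gcd_eq_one.mp ⟨m, v, by linarith⟩)
  refine exists_dvd_of_sum_mul_zpow_eq_zero hp (minpoly_adjoin_eq_cyclotomic hM0 hm0 hζ hη hcop)
    h0 (c := fun f => AdjoinSimple.gen ℚ (ω ^ M) ^ (v * f)) (by simp) ?_
  rw [← hsum]
  refine Finset.sum_congr rfl fun f _ => ?_
  have hω0 : ω ≠ 0 := hω.ne_zero (by positivity)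
  simp only [map_zpow₀, AdjoinSimple.algebraMap_gen]
  rw [← zpow_natCast, ← zpow_natCast, ← zpow_mul, ← zpow_mul, ← zpow_mul, ← zpow_add₀ hω0]
  congr 1
  linear_combination f * huv

theorem orderOf_dvd_mul_lcm_of_sum_zpow_eq_zero {L : Type*} [Field L] [CharZero L]
    {F : Finset ℤ} (h0 : 0 ∈ F) {N : ℕ} (hN : ∀ p, p.Prime → p ≤ F.card → p ∣ N) {ω : L}
    (hω : IsOfFinOrder ω) (hsum : ∑ f ∈ F, ω ^ f = 0) :
    orderOf ω ∣ N * (F.erase 0).lcm Int.natAbs := by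
  set s := orderOf ω
  have hs : s ≠ 0 := hω.orderOf_pos.ne'
  have hlcm : ∀ {p j : ℕ}, (∃ f ∈ F, f ≠ 0 ∧ (p : ℤ) ^ j ∣ f) →
      p ^ j ∣ (F.erase 0).lcm Int.natAbs := by
    rintro p j ⟨f, hf, hf0, hpf⟩
    exact (Int.natCast_dvd.mp (by exact_mod_cast hpf)).trans
      (Finset.dvd_lcm (Finset.mem_erase.mpr ⟨hf0, hf⟩))
  refine (Nat.dvd_iff_prime_pow_dvd_dvd _ _).mpr fun p j hp hpj => ?_
  have hj := (hp.pow_dvd_iff_le_factorization hs).mp hpj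
  cases hv : s.factorization p with
  | zero => rw [hv, Nat.le_zero] at hj; rw [hj, pow_zero]; exact one_dvd _
  | succ k =>
    refine (pow_dvd_pow p (hv ▸ hj)).trans ?_
    have hω' : IsPrimitiveRoot ω (p ^ (k + 1) * (s / p ^ (k + 1))) := by
      rw [← hv, Nat.ordProj_mul_ordCompl_eq_self]
      exact IsPrimitiveRoot.orderOf ω
    obtain ⟨h1, h2⟩ :=
      exists_dvd_of_sum_zpow_eq_zero hp (hv ▸ Nat.not_dvd_ordCompl hp hs) hω' h0 hsum
    rcases le_or_gt p F.card with hpF | hpF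
    · rw [pow_succ']
      exact mul_dvd_mul (hN p hp hpF) (hlcm h1)
    · exact (hlcm (h2 hpF)).trans (dvd_mul_left _ _)

theorem periodic_of_periodic_sub {a : ℤ → ℤ} (ha : ∀ x, a x = 0 ∨ a x = 1) {ℓ N : ℤ}
    (hℓN : ℓ ∣ N) (h : Periodic (fun x => a (x + ℓ) - a x) N) : Periodic a N := by
  have hc : Periodic (fun x => a (x + N) - a x) ℓ := fun x => by
    have := h x
    simp only [add_right_comm x ℓ N] at this ⊢
    linarith
  obtain ⟨r, rfl⟩ := hℓN
  have hcN : Periodic (fun x => a (x + ℓ * r) - a x) (ℓ * r) := by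
    simpa only [Int.cast_id, mul_comm] using hc.int_mul r
  -- `a (x + 2 N) - a x = 2 (a (x + N) - a x)` lies in `{-1, 0, 1}`
  refine fun x => ?_
  have := hcN x
  simp only at this
  rcases ha x with h1 | h1 <;> rcases ha (x + ℓ * r) with h2 | h2 <;>
    rcases ha (x + ℓ * r + ℓ * r) with h3 | h3 <;> omega

theorem stmt_5_general (F : Finset ℤ) (h0 : (0 : ℤ) ∈ F) (A : Set ℤ)
    (ℓ : ℕ)
    (hper : ∀ x : ℤ, ∑ f ∈ F, A.indicator (1 : ℤ → ℤ) (x + (ℓ : ℤ) - f)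
      = ∑ f ∈ F, A.indicator (1 : ℤ → ℤ) (x - f))
    (q : ℕ) (hq : q = Nat.lcm ℓ (∏ p ∈ (Finset.range (2 * F.card + 1)).filter Nat.Prime, p))
    (n : ℕ) (hn : n = (F.erase 0).lcm (fun f => f.natAbs)) :
    ∀ x : ℤ, x + (q * n : ℕ) ∈ A ↔ x ∈ A := by
  set a : ℤ → ℤ := A.indicator 1
  set b : ℤ → ℤ := fun x => a (x + ℓ) - a x
  have ha : ∀ x, a x = 0 ∨ a x = 1 := fun x => by by_cases hx : x ∈ A <;> simp [a, hx]
  have hconv : ∀ x, ∑ f ∈ F, b (x - f) = 0 := fun x => by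
    simp only [b, Finset.sum_sub_distrib, sub_add_eq_add_sub, a, hper, sub_self]
  have hfin : (Set.range b).Finite := (Set.finite_Icc (-1) 1).subset <|
    Set.range_subset_iff.mpr fun x => by
      rcases ha x with h1 | h1 <;> rcases ha (x + ℓ) with h2 | h2 <;> simp [b, h1, h2]
  obtain ⟨T, hT, hbT⟩ := exists_periodic_of_sum_comp_sub_eq_zero ⟨0, h0⟩ hconv hfin
  have hqF : ∀ p, p.Prime → p ≤ F.card → p ∣ q := fun p hp hpF => hq ▸
    (Finset.dvd_prod_of_mem _ (Finset.mem_filter.mpr ⟨Finset.mem_range.mpr (by omega), hp⟩)).trans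
      (Nat.dvd_lcm_right _ _)
  have hbN : Periodic b (q * n : ℕ) := fun x => Int.cast_injective (α := ℂ) <|
    periodic_of_sum_comp_sub_eq_zero (b := fun x => (b x : ℂ)) hT (hbT.comp _)
      (by exact_mod_cast hconv) (fun ω hω hsum => orderOf_dvd_iff_pow_eq_one.mp <| hn ▸
        orderOf_dvd_mul_lcm_of_sum_zpow_eq_zero h0 hqF
          (isOfFinOrder_iff_pow_eq_one.mpr ⟨T, hT, hω⟩) hsum) x
  have hℓ : (ℓ : ℤ) ∣ (q * n : ℕ) := Int.natCast_dvd_natCast.mpr <|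
    hq ▸ (Nat.dvd_lcm_left _ _).mul_right n
  have haN := periodic_of_periodic_sub ha hℓ hbN
  intro x
  rw [← Set.indicator_eq_one_iff_mem ℤ, ← Set.indicator_eq_one_iff_mem ℤ]
  exact Iff.of_eq (congrArg (· = (1 : ℤ)) (haN x))

/-- Universal period of one-dimensional tiles: if `𝟙_F * 𝟙_A` is `ℓℤ`-periodic, `0 ∈ F`,
`q` is the lcm of `ℓ` and all primes `≤ 2|F|`, and `n` is the lcm of `|f|` over
`f ∈ F \ {0}`, then `A` is `qn·ℤ`-periodic. -/
theorem stmt_5 (F : Finset ℤ) (h0 : (0 : ℤ) ∈ F) (A : Set ℤ)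
    (ℓ : ℕ) (hℓ : 1 ≤ ℓ)
    (hper : ∀ x : ℤ, ∑ f ∈ F, A.indicator (1 : ℤ → ℤ) (x + (ℓ : ℤ) - f)
      = ∑ f ∈ F, A.indicator (1 : ℤ → ℤ) (x - f))
    (q : ℕ) (hq : q = Nat.lcm ℓ (∏ p ∈ (Finset.range (2 * F.card + 1)).filter Nat.Prime, p))
    (n : ℕ) (hn : n = (F.erase 0).lcm (fun f => f.natAbs)) :
    ∀ x : ℤ, x + (q * n : ℕ) ∈ A ↔ x ∈ A :=
  stmt_5_general F h0 A ℓ hper q hq n hn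
end

section
/- Let F ⊂ ℤ^d be finite with 0 ∈ F, and let A ⊂ ℤ^d be such that 𝟙_F * 𝟙_A is ℓℤ^d-periodic for some ℓ ≥ 1. Let q be the least common multiple of ℓ and all primes ≤ 2|F|. Then there exist functions φ_f : ℤ^d → [0,1] for f ∈ F \ {0}, each ⟨qf⟩-periodic (i.e., φ_f(x + qf) = φ_f(x) for all x), such that 𝟙_A = 𝟙_F * 𝟙_A − Σ_{f ∈ F \ {0}} φ_f. -/
/-!
Mod `p` we have `𝟙_{pF} = 𝟙_F^{*p}` (Frobenius in `𝔽_p[ℤ^d]`), so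
`𝟙_{pF} * 𝟙_A = 𝟙_F^{*(p-1)} * (𝟙_F * 𝟙_A)` is `ℓℤ^d`-periodic mod `p`, hence exactly, its values
lying in `[0, |F|] ⊆ [0, p)` when `p > |F|`. Iterating, `𝟙_{rF} * 𝟙_A` is `ℓℤ^d`-periodic whenever
no prime factor of `r` is `≤ |F|`. If also `r ≡ 1 mod ℓ`, then `𝟙_{rF} * 𝟙_A - 𝟙_F * 𝟙_A` is a
periodic sum of coboundaries `h(· - m) - h` of bounded functions, so it vanishes: averaging along
one period `m` at a time kills one coboundary up to an `O(1)` error. Hence for `r = 1 + kq`,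
`𝟙_A(x) = 𝟙_F * 𝟙_A(x) - ∑_{f ≠ 0} 𝟙_A(x - rf)`, and `φ_f(x)` is an invariant mean over `k` of
`𝟙_A(x - (1 + kq)f)`; it is `⟨qf⟩`-periodic since `x ↦ x + qf` shifts `k` by one.
-/

open Finset Function Filter Topology
open scoped translate

section Convolution
variable {G : Type*} [AddCommGroup G] (k : Type*) [CommRing k]

def translateEnd : Multiplicative G →* Module.End k (G → k) where
  toFun g :=
    { toFun := τ g.toAdd
      map_add' := translate_add_right _
      map_smul' _ _ := translate_smul_right _ _ _ }
  map_one' := by ext; simp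
  map_mul' g g' := by ext; simp [sub_sub]

noncomputable def convolutionAction : AddMonoidAlgebra k G →ₐ[k] Module.End k (G → k) :=
  AddMonoidAlgebra.lift k (Module.End k (G → k)) G (translateEnd k)

lemma convolutionAction_single_one (g : G) (h : G → k) :
    convolutionAction k (AddMonoidAlgebra.single g 1) h = τ g h := by
  simp [convolutionAction, AddMonoidAlgebra.lift_single, translateEnd]

lemma translate_convolutionAction (v : G) (w : AddMonoidAlgebra k G) (h : G → k) :
    τ v (convolutionAction k w h) = convolutionAction k w (τ v h) := by
  rw [← convolutionAction_single_one, ← convolutionAction_single_one, ← Module.End.mul_apply,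
    ← map_mul, mul_comm, map_mul, Module.End.mul_apply]

end Convolution

lemma periodic_iff_translate_neg_eq {G α : Type*} [AddCommGroup G] {c : G → α} {v : G} :
    Periodic c v ↔ τ (-v) c = c := by
  simp [funext_iff, Periodic]

section
variable {G ι : Type*} [AddCommGroup G]

theorem periodic_sum_translate_nsmul_of_periodic_sum_translate {p : ℕ} [Fact p.Prime]
    (s : Finset ι) (g : ι → G) (b : G → ZMod p) {v : G}
    (h : Periodic (∑ i ∈ s, τ (g i) b) v) : Periodic (∑ i ∈ s, τ (p • g i) b) v := by
  have : CharP (AddMonoidAlgebra (ZMod p) G) p :=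
    charP_of_injective_algebraMap (algebraMap (ZMod p) _).injective p
  set u := ∑ i ∈ s, AddMonoidAlgebra.single (g i) (1 : ZMod p)
  have hu : convolutionAction (ZMod p) u b = ∑ i ∈ s, τ (g i) b := by
    simp only [u, map_sum, LinearMap.sum_apply, convolutionAction_single_one]
  have hup : convolutionAction (ZMod p) (u ^ p) b = ∑ i ∈ s, τ (p • g i) b := by
    simp only [u, sum_pow_char, AddMonoidAlgebra.single_pow, one_pow, map_sum,
      LinearMap.sum_apply, convolutionAction_single_one]
  have hp : u ^ p = u ^ (p - 1) * u := by
    rw [← pow_succ, Nat.sub_add_cancel (Fact.out : p.Prime).one_le]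
  rw [periodic_iff_translate_neg_eq] at h ⊢
  rw [← hup, hp, map_mul, Module.End.mul_apply, hu, translate_convolutionAction, h]

theorem periodic_sum_comp_sub_nsmul_of_prime {p : ℕ} (hp : p.Prime) {a : G → ℕ}
    (ha : ∀ x, a x ≤ 1) {s : Finset ι} (hs : s.card < p) {g : ι → G} {v : G}
    (h : Periodic (fun x => ∑ i ∈ s, a (x - g i)) v) :
    Periodic (fun x => ∑ i ∈ s, a (x - p • g i)) v := by
  have : Fact p.Prime := ⟨hp⟩
  have hcast : ∀ g' : ι → G, (Nat.cast ∘ fun x => ∑ i ∈ s, a (x - g' i)) =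
      ∑ i ∈ s, τ (g' i) (fun y => (a y : ZMod p)) := by
    intro g'
    ext x
    simp [Finset.sum_apply]
  have hmod := periodic_sum_translate_nsmul_of_periodic_sum_translate s g
    (fun y => (a y : ZMod p)) (hcast g ▸ h.comp Nat.cast)
  rw [← hcast] at hmod
  have hlt : ∀ y, ∑ i ∈ s, a (y - p • g i) < p := fun y =>
    ((sum_le_card_nsmul s _ 1 fun i _ => ha _).trans_eq (by simp)).trans_lt hs
  intro x
  dsimp only
  rw [← ZMod.val_natCast_of_lt (hlt _), ← ZMod.val_natCast_of_lt (hlt x)]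
  exact congrArg ZMod.val (hmod x)

theorem periodic_sum_comp_sub_nsmul {a : G → ℕ} (ha : ∀ x, a x ≤ 1) {s : Finset ι} {v : G}
    {r : ℕ} (hr0 : r ≠ 0) (hr : ∀ p, p.Prime → p ∣ r → s.card < p) {g : ι → G}
    (h : Periodic (fun x => ∑ i ∈ s, a (x - g i)) v) :
    Periodic (fun x => ∑ i ∈ s, a (x - r • g i)) v := by
  induction r using Nat.recOnMul generalizing g with
  | zero => exact absurd rfl hr0
  | one => simpa using h
  | prime p hp => exact periodic_sum_comp_sub_nsmul_of_prime hp ha (hr p hp dvd_rfl) h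
  | mul m n ihm ihn =>
    simp_rw [mul_smul]
    exact ihm (left_ne_zero_of_mul hr0) (fun p hp hpm => hr p hp (hpm.mul_right n))
      (ihn (right_ne_zero_of_mul hr0) (fun p hp hpn => hr p hp (hpn.mul_left m)) h)

theorem sum_range_sub_comp_add_nsmul {M : Type*} [AddCommGroup M] (h : G → M) (y m : G) (n : ℕ) :
    ∑ k ∈ range n, (h (y + k • m - m) - h (y + k • m)) = h (y - m) - h (y + n • m - m) := by
  simpa only [zero_smul, add_zero, succ_nsmul, ← add_assoc, add_sub_cancel_right] using
    sum_range_sub' (fun k : ℕ => h (y + k • m - m)) n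

theorem abs_mul_sub_sum_sub_le_of_abs_sub_sum_insert_sub_le [DecidableEq ι] {s : Finset ι}
    {j : ι} (hj : j ∉ s) {m : ι → G} {D : G → ℝ} {H : ι → G → ℝ} {B ε : ℝ} (hD : Periodic D (m j))
    (hH : ∀ x, |H j x| ≤ B) (h : ∀ x, |D x - ∑ i ∈ insert j s, (H i (x - m i) - H i x)| ≤ ε)
    (n : ℕ) (y : G) :
    |n * D y - ∑ i ∈ s, (∑ k ∈ range n, H i (y - m i + k • m j) -
      ∑ k ∈ range n, H i (y + k • m j))| ≤ n * ε + 2 * B := by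
  have key : n * D y - ∑ i ∈ s, (∑ k ∈ range n, H i (y - m i + k • m j) -
      ∑ k ∈ range n, H i (y + k • m j)) =
      ∑ k ∈ range n, (D (y + k • m j) - ∑ i ∈ insert j s,
        (H i (y + k • m j - m i) - H i (y + k • m j)))
      + (H j (y - m j) - H j (y + n • m j - m j)) := by
    simp only [fun k : ℕ => hD.nsmul k y, sum_insert hj, sum_const, card_range, nsmul_eq_mul,
      ← sum_range_sub_comp_add_nsmul, sum_sub_distrib, sum_add_distrib]
    rw [sum_comm (s := s), sum_comm (s := s)]
    simp only [sub_add_eq_add_sub]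
    ring
  rw [key]
  refine (abs_add_le _ _).trans (add_le_add ?_ ?_)
  · calc _ ≤ ∑ k ∈ range n, |D (y + k • m j) - ∑ i ∈ insert j s,
          (H i (y + k • m j - m i) - H i (y + k • m j))| := abs_sum_le_sum_abs _ _
      _ ≤ ∑ k ∈ range n, ε := sum_le_sum fun k _ => h _
      _ = n * ε := by simp
  · linarith [abs_sub (H j (y - m j)) (H j (y + n • m j - m j)), hH (y - m j),
      hH (y + n • m j - m j)]

theorem abs_le_of_abs_sub_sum_sub_le (s : Finset ι) (m : ι → G) :
    ∀ {D : G → ℝ} {H : ι → G → ℝ} {B ε : ℝ}, (∀ i ∈ s, Periodic D (m i)) →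
      (∀ i ∈ s, ∀ x, |H i x| ≤ B) →
      (∀ x, |D x - ∑ i ∈ s, (H i (x - m i) - H i x)| ≤ ε) → ∀ x, |D x| ≤ ε := by
  classical
  induction s using Finset.induction_on with
  | empty => intro D H B ε _ _ h x; simpa using h x
  | insert j s hj ih =>
    intro D H B ε hD hH h x
    have hbound : ∀ n : ℕ, n * |D x| ≤ n * ε + 2 * B := fun n => by
      simpa [abs_mul] using ih (D := fun y => n * D y)
        (H := fun i y => ∑ k ∈ range n, H i (y + k • m j)) (B := n * B)
        (fun i hi => (hD i (mem_insert_of_mem hi)).comp fun t => (n : ℝ) * t)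
        (fun i hi y => calc
          _ ≤ ∑ k ∈ range n, |H i (y + k • m j)| := abs_sum_le_sum_abs _ _
          _ ≤ ∑ k ∈ range n, B := sum_le_sum fun k _ => hH i (mem_insert_of_mem hi) _
          _ = n * B := by simp)
        (abs_mul_sub_sum_sub_le_of_abs_sub_sum_insert_sub_le hj (hD j (mem_insert_self j s))
          (hH j (mem_insert_self j s)) h n) x
    by_contra! hlt
    obtain ⟨n, hn⟩ := exists_nat_gt (2 * B / (|D x| - ε))
    rw [div_lt_iff₀ (sub_pos.2 hlt)] at hn
    linarith [hbound n]

theorem sum_comp_sub_eq_of_periodic {s : Finset ι} {g g' : ι → G} {a : G → ℝ} {B : ℝ}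
    (ha : ∀ x, |a x| ≤ B)
    (h : ∀ i ∈ s, Periodic (fun x => ∑ j ∈ s, a (x - g j)) (g' i - g i))
    (h' : ∀ i ∈ s, Periodic (fun x => ∑ j ∈ s, a (x - g' j)) (g' i - g i)) (x : G) :
    ∑ i ∈ s, a (x - g' i) = ∑ i ∈ s, a (x - g i) := by
  have := abs_le_of_abs_sub_sum_sub_le s (fun i => g' i - g i)
    (D := fun x => ∑ j ∈ s, a (x - g' j) - ∑ j ∈ s, a (x - g j)) (H := fun i y => a (y - g i))
    (B := B) (ε := 0) (fun i hi => (h' i hi).sub (h i hi)) (fun i _ y => ha _)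
    (fun y => by simp [sum_sub_distrib, sub_sub]) x
  rwa [abs_nonpos_iff, sub_eq_zero] at this

theorem periodic_sum_indicator_comp_sub_nsmul {A : Set G} {s : Finset ι} {v : G} {r : ℕ}
    (hr0 : r ≠ 0) (hr : ∀ p, p.Prime → p ∣ r → s.card < p) {g : ι → G}
    (h : Periodic (fun x => ∑ i ∈ s, A.indicator (1 : G → ℝ) (x - g i)) v) :
    Periodic (fun x => ∑ i ∈ s, A.indicator (1 : G → ℝ) (x - r • g i)) v := by
  have hcast : ∀ g' : ι → G, (fun x => ∑ i ∈ s, A.indicator (1 : G → ℝ) (x - g' i)) =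
      Nat.cast ∘ fun x => ∑ i ∈ s, A.indicator (1 : G → ℕ) (x - g' i) := by
    intro g'
    ext x
    rw [comp_apply, Nat.cast_sum]
    refine sum_congr rfl fun i _ => ?_
    by_cases hx : x - g' i ∈ A <;> simp [hx]
  rw [hcast] at h ⊢
  refine (periodic_sum_comp_sub_nsmul (fun y => ?_) hr0 hr fun x => Nat.cast_injective (h x)).comp _
  by_cases hy : y ∈ A <;> simp [hy]

end

/-- A Banach limit: the limit along a free ultrafilter always exists for bounded sequences, and
Cesàro averaging makes it invariant under `k ↦ k + 1`. -/
noncomputable def cesaroMean (b : ℕ → ℝ) : ℝ :=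
  limUnder (hyperfilter ℕ) fun N => (∑ k ∈ range N, b k) / N

lemma hyperfilter_nat_le_atTop : (hyperfilter ℕ : Filter ℕ) ≤ atTop :=
  Nat.cofinite_eq_atTop ▸ hyperfilter_le_cofinite

section CesaroMean
variable {b : ℕ → ℝ} {a c : ℝ}

lemma cesaroMean_eq_of_tendsto {l : ℝ}
    (h : Tendsto (fun N => (∑ k ∈ range N, b k) / N) (hyperfilter ℕ) (𝓝 l)) :
    cesaroMean b = l :=
  h.limUnder_eq

lemma exists_tendsto_cesaro (hb : ∀ k, b k ∈ Set.Icc a c) :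
    ∃ l ∈ Set.Icc a c, Tendsto (fun N => (∑ k ∈ range N, b k) / N) (hyperfilter ℕ) (𝓝 l) := by
  have hev : ∀ᶠ N in (hyperfilter ℕ : Filter ℕ), (∑ k ∈ range N, b k) / N ∈ Set.Icc a c := by
    filter_upwards [hyperfilter_nat_le_atTop (eventually_ge_atTop 1)] with N hN
    have hN : (0 : ℝ) < N := by exact_mod_cast hN
    constructor
    · rw [le_div_iff₀ hN]
      simpa [mul_comm] using card_nsmul_le_sum (range N) b a fun k _ => (hb k).1
    · rw [div_le_iff₀ hN]
      simpa [mul_comm] using sum_le_card_nsmul (range N) b c fun k _ => (hb k).2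
  exact isCompact_Icc.ultrafilter_le_nhds' ((hyperfilter ℕ).map _) hev

lemma tendsto_cesaroMean (hb : ∀ k, b k ∈ Set.Icc a c) :
    Tendsto (fun N => (∑ k ∈ range N, b k) / N) (hyperfilter ℕ) (𝓝 (cesaroMean b)) := by
  obtain ⟨l, -, hl⟩ := exists_tendsto_cesaro hb
  rwa [cesaroMean_eq_of_tendsto hl]

lemma cesaroMean_mem_Icc (hb : ∀ k, b k ∈ Set.Icc a c) : cesaroMean b ∈ Set.Icc a c := by
  obtain ⟨l, hl, hlim⟩ := exists_tendsto_cesaro hb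
  rwa [cesaroMean_eq_of_tendsto hlim]

lemma cesaroMean_const (c : ℝ) : cesaroMean (fun _ => c) = c := by
  refine cesaroMean_eq_of_tendsto (tendsto_const_nhds.congr' ?_)
  filter_upwards [hyperfilter_nat_le_atTop (eventually_ge_atTop 1)] with N hN
  have : (N : ℝ) ≠ 0 := by positivity
  simp [field]

lemma cesaroMean_sum {ι : Type*} (s : Finset ι) {b : ι → ℕ → ℝ}
    (hb : ∀ i ∈ s, ∀ k, b i k ∈ Set.Icc a c) :
    cesaroMean (fun k => ∑ i ∈ s, b i k) = ∑ i ∈ s, cesaroMean (b i) := by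
  refine cesaroMean_eq_of_tendsto
    ((tendsto_finsetSum s fun i hi => tendsto_cesaroMean (hb i hi)).congr fun N => ?_)
  rw [← sum_div, sum_comm]

lemma cesaroMean_comp_succ (hb : ∀ k, b k ∈ Set.Icc a c) :
    cesaroMean (fun k => b (k + 1)) = cesaroMean b := by
  refine cesaroMean_eq_of_tendsto ?_
  have hdiff : Tendsto (fun N : ℕ => (b N - b 0) / N) (hyperfilter ℕ) (𝓝 0) := by
    refine squeeze_zero_norm (fun N => ?_)
      ((tendsto_const_div_atTop_nhds_zero_nat (c - a)).mono_left hyperfilter_nat_le_atTop)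
    rw [norm_div, Real.norm_natCast]
    gcongr
    rw [Real.norm_eq_abs, abs_le]
    constructor <;> linarith [(hb N).1, (hb N).2, (hb 0).1, (hb 0).2]
  have := (tendsto_cesaroMean hb).add hdiff
  rw [add_zero] at this
  refine this.congr fun N => ?_
  rw [← add_div]
  congr 1
  linarith [sum_range_succ' b N, sum_range_succ b N]

end CesaroMean

theorem lt_of_prime_dvd_one_add_mul {n q k p : ℕ} (hq : primorial n ∣ q) (hp : p.Prime)
    (hpr : p ∣ 1 + k * q) : n < p := by
  by_contra! hle
  have hpq : p ∣ q := (dvd_prod_of_mem _ (mem_filter.2 ⟨mem_range.2 (by omega), hp⟩)).trans hq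
  exact hp.one_lt.ne' (Nat.dvd_one.1 ((Nat.dvd_add_right (hpq.mul_left k)).1 (add_comm 1 _ ▸ hpr)))

theorem stmt_6_general (d : ℕ) (F : Finset (Fin d → ℤ)) (h0 : (0 : Fin d → ℤ) ∈ F)
    (A : Set (Fin d → ℤ)) (ℓ : ℕ)
    (hper : ∀ v : Fin d → ℤ, ∀ x : Fin d → ℤ,
      ∑ f ∈ F, A.indicator (1 : (Fin d → ℤ) → ℝ) (x + ℓ • v - f)
        = ∑ f ∈ F, A.indicator (1 : (Fin d → ℤ) → ℝ) (x - f))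
    (q : ℕ) (hq : q = Nat.lcm ℓ (∏ p ∈ (Finset.range (2 * F.card + 1)).filter Nat.Prime, p)) :
    ∃ φ : (Fin d → ℤ) → (Fin d → ℤ) → ℝ,
      (∀ f ∈ F.erase 0, ∀ x : Fin d → ℤ,
        φ f x ∈ Set.Icc (0 : ℝ) 1 ∧ φ f (x + q • f) = φ f x) ∧
      (∀ x : Fin d → ℤ,
        A.indicator (1 : (Fin d → ℤ) → ℝ) x
          = ∑ f ∈ F, A.indicator (1 : (Fin d → ℤ) → ℝ) (x - f) - ∑ f ∈ F.erase 0, φ f x) := by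
  set a : (Fin d → ℤ) → ℝ := A.indicator 1
  have ha : ∀ y, a y ∈ Set.Icc (0 : ℝ) 1 := fun y => by by_cases hy : y ∈ A <;> simp [a, hy]
  obtain ⟨c, hc⟩ : ℓ ∣ q := hq ▸ Nat.dvd_lcm_left _ _
  have hprime : ∀ k p, p.Prime → p ∣ 1 + k * q → F.card < p := fun k p hp hpr => by
    have := lt_of_prime_dvd_one_add_mul (hq ▸ Nat.dvd_lcm_right _ _) hp hpr
    omega
  have hdil : ∀ k : ℕ, ∀ x, ∑ f ∈ F, a (x - (1 + k * q) • f) = ∑ f ∈ F, a (x - f) := by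
    intro k
    have hperiod : ∀ f : Fin d → ℤ, (1 + k * q) • f - f = ℓ • ((k * c) • f) := by
      intro f
      rw [add_smul, one_smul, add_sub_cancel_left, smul_smul, hc]
      ring_nf
    exact sum_comp_sub_eq_of_periodic (g := fun f => f) (B := 1)
      (fun y => abs_le.2 ⟨by linarith [(ha y).1], (ha y).2⟩)
      (fun f _ => hperiod f ▸ hper _)
      (fun f _ => hperiod f ▸ periodic_sum_indicator_comp_sub_nsmul (by omega) (hprime k)
        (g := fun f => f) (hper _))
  refine ⟨fun f x => cesaroMean fun k => a (x - (1 + k * q) • f),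
    fun f _ x => ⟨cesaroMean_mem_Icc fun k => ha _, ?_⟩, fun x => ?_⟩
  · dsimp only
    rw [← cesaroMean_comp_succ (b := fun k => a (x + q • f - (1 + k * q) • f)) fun k => ha _]
    congr! 3 with k
    rw [add_one_mul, ← add_assoc, add_smul _ q, add_sub_add_right_eq_sub]
  · rw [← cesaroMean_sum _ fun f _ k => ha _]
    simp_rw [fun k => sum_erase_eq_sub (f := fun f => a (x - (1 + k * q) • f)) h0, hdil]
    simp [cesaroMean_const]

/-- Structure theorem for tilings: if `𝟙_F * 𝟙_A` is `ℓℤ^d`-periodic and `0 ∈ F`, then,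
with `q` the lcm of `ℓ` and all primes `≤ 2|F|`, there exist `⟨qf⟩`-periodic functions
`φ_f : ℤ^d → [0,1]` for `f ∈ F \ {0}` with `𝟙_A = 𝟙_F * 𝟙_A − Σ_{f ∈ F \ {0}} φ_f`. -/
theorem stmt_6 (d : ℕ) (F : Finset (Fin d → ℤ)) (h0 : (0 : Fin d → ℤ) ∈ F)
    (A : Set (Fin d → ℤ)) (ℓ : ℕ) (hℓ : 1 ≤ ℓ)
    (hper : ∀ v : Fin d → ℤ, ∀ x : Fin d → ℤ,
      ∑ f ∈ F, A.indicator (1 : (Fin d → ℤ) → ℝ) (x + ℓ • v - f)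
        = ∑ f ∈ F, A.indicator (1 : (Fin d → ℤ) → ℝ) (x - f))
    (q : ℕ) (hq : q = Nat.lcm ℓ (∏ p ∈ (Finset.range (2 * F.card + 1)).filter Nat.Prime, p)) :
    ∃ φ : (Fin d → ℤ) → (Fin d → ℤ) → ℝ,
      (∀ f ∈ F.erase 0, ∀ x : Fin d → ℤ,
        φ f x ∈ Set.Icc (0 : ℝ) 1 ∧ φ f (x + q • f) = φ f x) ∧
      (∀ x : Fin d → ℤ,
        A.indicator (1 : (Fin d → ℤ) → ℝ) x
          = ∑ f ∈ F, A.indicator (1 : (Fin d → ℤ) → ℝ) (x - f) - ∑ f ∈ F.erase 0, φ f x) :=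
  stmt_6_general d F h0 A ℓ hper q hq
end

section
/- Let χ : ℤ² → ℝ satisfy χ * 𝟙_{{(0,0),(0,2)}} = 0 and χ * 𝟙_{{(0,0),(1,0)}} = 0. Then χ * 𝟙_{{(0,0),(2,−2)}} = 0. -/
/-- If `χ * 𝟙_{{(0,0),(0,2)}} = 0` and `χ * 𝟙_{{(0,0),(1,0)}} = 0`, then
`χ * 𝟙_{{(0,0),(2,−2)}} = 0`. -/
theorem stmt_8 (χ : ℤ × ℤ → ℝ)
    (h1 : ∀ x : ℤ × ℤ, χ (x - (0, 0)) + χ (x - (0, 2)) = 0)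
    (h2 : ∀ x : ℤ × ℤ, χ (x - (0, 0)) + χ (x - (1, 0)) = 0) :
    ∀ x : ℤ × ℤ, χ (x - (0, 0)) + χ (x - (2, -2)) = 0 := by
  intro x
  have a := h2 x
  have b := h2 (x - (1, 0))
  have c := h1 (x - (2, -2))
  have e1 : x - (1, 0) - (0, 0) = x - (1, 0) := by simp
  have e2 : x - (1, 0) - (1, 0) = x - (2, 0) := by
    simp [Prod.ext_iff]; ring
  have e3 : x - (2, -2) - (0, 0) = x - (2, -2) := by simp
  have e4 : x - (2, -2) - (0, 2) = x - (2, 0) := by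
    simp [Prod.ext_iff]
  rw [e1, e2] at b
  rw [e3, e4] at c
  linarith
end

section
/- Let α be irrational, χ(m₁,m₂) = (−1)^{⌊m₂/2⌋+m₁}, and let A ⊂ ℤ² be the set with indicator 𝟙_A(m₁,m₂) = χ(m₁,m₂)({αm₁}+{αm₂}−{α(m₁+m₂)}−1/2)+1/2. Let F = {t₁(0,2)+t₂(1,0)+t₃(2,−2) : t₁,t₂,t₃ ∈ {0,1}}. Then 𝟙_F * 𝟙_A = 4 identically, i.e., A is a level 4 tiling of ℤ² by F. -/
/-!
Writing `f_t = t₁(0,2) + t₂(1,0) + t₃(2,−2)`, the sign factors as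
`χ(x − f_t) = (−1)^{t₁+t₂+t₃} χ(x)`, so `(𝟙_F * 𝟙_A)(x) = 4 + χ(x) Σ_t (−1)^{t₁+t₂+t₃} φ(x − f_t)`
with `φ(m) = {αm₁} + {αm₂} − {α(m₁+m₂)} − 1/2`. The coordinates `m₁`, `m₂`, `m₁ + m₂` of
`m = x − f_t` do not depend on `t₁`, `t₂`, `t₃` respectively, so each of the three parts of `φ`
is killed by the alternating sum over the cube `{0,1}³`.
-/

open Finset

def unitCube : Finset (ℤ × ℤ × ℤ) := {0, 1} ×ˢ {0, 1} ×ˢ {0, 1}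

def tileVec (t : ℤ × ℤ × ℤ) : ℤ × ℤ := t.1 • (0, 2) + t.2.1 • (1, 0) + t.2.2 • (2, -2)

def chi (m : ℤ × ℤ) : ℤˣ := (⌊(m.2 : ℚ) / 2⌋ + m.1).negOnePow

theorem sub_tileVec (x : ℤ × ℤ) (t : ℤ × ℤ × ℤ) :
    x - tileVec t = (x.1 - t.2.1 - 2 * t.2.2, x.2 - 2 * t.1 + 2 * t.2.2) := by
  ext <;> simp only [tileVec, Prod.fst_sub, Prod.snd_sub, Prod.fst_add, Prod.snd_add,
    Prod.smul_fst, Prod.smul_snd, smul_eq_mul] <;> ring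

theorem sum_unitCube_negOnePow_mul_eq_zero {R : Type*} [CommRing R] (g₁ g₂ g₃ : ℤ → ℤ → R) :
    ∑ t ∈ unitCube, ((t.1 + t.2.1 + t.2.2).negOnePow : R) *
      (g₁ t.2.1 t.2.2 + g₂ t.1 t.2.2 + g₃ t.1 t.2.1) = 0 := by
  simp only [unitCube, sum_product, sum_pair (zero_ne_one' ℤ), Int.negOnePow_add,
    Int.negOnePow_zero, Int.negOnePow_one]
  push_cast
  ring

theorem chi_sub_tileVec (x : ℤ × ℤ) (t : ℤ × ℤ × ℤ) :
    chi (x - tileVec t) = (t.1 + t.2.1 + t.2.2).negOnePow * chi x := by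
  have hfloor : ⌊((x - tileVec t).2 : ℚ) / 2⌋ = ⌊(x.2 : ℚ) / 2⌋ + (t.2.2 - t.1) := by
    simp only [← Int.floor_add_intCast, sub_tileVec]
    push_cast
    ring_nf
  rw [chi, chi, hfloor, ← Int.negOnePow_add, Int.negOnePow_eq_iff]
  refine ⟨-(t.1 + t.2.1 + t.2.2), ?_⟩
  simp only [sub_tileVec]
  ring

theorem sum_unitCube_chi_mul_eq_zero {R : Type*} [CommRing R] (u v w : ℤ → R) (x : ℤ × ℤ) :
    ∑ t ∈ unitCube, ((chi (x - tileVec t) : ℤ) : R) *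
      (u (x - tileVec t).1 + v (x - tileVec t).2
        + w ((x - tileVec t).1 + (x - tileVec t).2)) = 0 := by
  calc _ = ((chi x : ℤ) : R) * ∑ t ∈ unitCube, ((t.1 + t.2.1 + t.2.2).negOnePow : R) *
        (u (x.1 - t.2.1 - 2 * t.2.2) + v (x.2 - 2 * t.1 + 2 * t.2.2)
          + w (x.1 + x.2 - 2 * t.1 - t.2.1)) := by
        rw [mul_sum]
        refine sum_congr rfl fun t _ => ?_
        rw [chi_sub_tileVec, Units.val_mul, Int.cast_mul, sub_tileVec]
        ring_nf
    _ = 0 := mul_eq_zero_of_right _ <| sum_unitCube_negOnePow_mul_eq_zero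
        (fun t₂ t₃ => u (x.1 - t₂ - 2 * t₃)) (fun t₁ t₃ => v (x.2 - 2 * t₁ + 2 * t₃))
        (fun t₁ t₂ => w (x.1 + x.2 - 2 * t₁ - t₂))

theorem stmt_10_general (α : ℝ) (a : ℤ × ℤ → ℝ)
    (ha : ∀ m : ℤ × ℤ, a m = ((Int.negOnePow (⌊(m.2 : ℚ) / 2⌋ + m.1) : ℤˣ) : ℝ)
        * (Int.fract (α * m.1) + Int.fract (α * m.2) - Int.fract (α * (m.1 + m.2)) - 1 / 2)
        + 1 / 2) :
    ∀ x : ℤ × ℤ,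
      ∑ t ∈ ({0, 1} : Finset ℤ) ×ˢ ({0, 1} : Finset ℤ) ×ˢ ({0, 1} : Finset ℤ),
        a (x - (t.1 • ((0 : ℤ), (2 : ℤ)) + t.2.1 • ((1 : ℤ), (0 : ℤ))
            + t.2.2 • ((2 : ℤ), (-2 : ℤ)))) = 4 := by
  intro x
  change ∑ t ∈ unitCube, a (x - tileVec t) = 4
  calc _ = ∑ t ∈ unitCube, ((chi (x - tileVec t) : ℤ) : ℝ) *
        (Int.fract (α * (x - tileVec t).1) - 1 / 2 + Int.fract (α * (x - tileVec t).2)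
          + -Int.fract (α * ((x - tileVec t).1 + (x - tileVec t).2 : ℤ)))
        + ∑ _t ∈ unitCube, (1 / 2 : ℝ) := by
        rw [← sum_add_distrib]
        refine sum_congr rfl fun t _ => ?_
        rw [ha, chi]
        push_cast
        ring
    _ = 4 := by
        rw [sum_unitCube_chi_mul_eq_zero (fun k => Int.fract (α * k) - 1 / 2)
          (fun k => Int.fract (α * k)) (fun k => -Int.fract (α * k)), sum_const]
        norm_num [unitCube]

/-- The set `A ⊂ ℤ²` with indicator
`𝟙_A(m₁,m₂) = χ(m₁,m₂)({αm₁}+{αm₂}−{α(m₁+m₂)}−1/2)+1/2`, where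
`χ(m₁,m₂) = (−1)^{⌊m₂/2⌋+m₁}` and `α` is irrational, is a level `4` tiling of `ℤ²` by the
eight-element tile `F = {t₁(0,2)+t₂(1,0)+t₃(2,−2) : t₁,t₂,t₃ ∈ {0,1}}`. -/
theorem stmt_10 (α : ℝ) (hα : Irrational α) (a : ℤ × ℤ → ℝ)
    (ha : ∀ m : ℤ × ℤ, a m = ((Int.negOnePow (⌊(m.2 : ℚ) / 2⌋ + m.1) : ℤˣ) : ℝ)
        * (Int.fract (α * m.1) + Int.fract (α * m.2) - Int.fract (α * (m.1 + m.2)) - 1 / 2)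
        + 1 / 2) :
    ∀ x : ℤ × ℤ,
      ∑ t ∈ ({0, 1} : Finset ℤ) ×ˢ ({0, 1} : Finset ℤ) ×ˢ ({0, 1} : Finset ℤ),
        a (x - (t.1 • ((0 : ℤ), (2 : ℤ)) + t.2.1 • ((1 : ℤ), (0 : ℤ))
            + t.2.2 • ((2 : ℤ), (-2 : ℤ)))) = 4 :=
  stmt_10_general α a ha
end

section
/- Let F₂ = {0,2} × {0,1} ⊂ ℤ² and let a, b : ℤ → {0,1} be arbitrary functions. Then A₂ = {(4n, 2m + a(n)) : n,m ∈ ℤ} ∪ {(4n + 1 + 2b(m), 2m) : n,m ∈ ℤ} satisfies 𝟙_{F₂} * 𝟙_{A₂} = 1 identically, i.e., A₂ tiles ℤ² by F₂ at level one. -/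
set_option maxHeartbeats 2000000 in


/-- For `F₂ = {0,2} × {0,1}` and arbitrary `a, b : ℤ → {0,1}`, the set
`A₂ = {(4n, 2m + a(n))} ∪ {(4n + 1 + 2b(m), 2m)}` is a level one tiling of `ℤ²` by `F₂`. -/
theorem stmt_18 (a b : ℤ → ℤ) (ha : ∀ n : ℤ, a n = 0 ∨ a n = 1)
    (hb : ∀ m : ℤ, b m = 0 ∨ b m = 1)
    (A₂ : Set (ℤ × ℤ))
    (hA : A₂ = {p : ℤ × ℤ | ∃ n m : ℤ, p = (4 * n, 2 * m + a n)}
        ∪ {p : ℤ × ℤ | ∃ n m : ℤ, p = (4 * n + 1 + 2 * b m, 2 * m)}) :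
    ∀ x : ℤ × ℤ,
      ∑ f ∈ ({0, 2} : Finset ℤ) ×ˢ ({0, 1} : Finset ℤ),
        A₂.indicator (1 : ℤ × ℤ → ℤ) (x - f) = 1 := by
  have key : ∀ u v : ℤ, ((u, v) ∈ A₂) ↔
      ((u % 4 = 0 ∧ v % 2 = a (u / 4)) ∨ (v % 2 = 0 ∧ u % 4 = 1 + 2 * b (v / 2))) := by
    intro u v
    rw [hA]
    constructor
    · rintro (⟨n, m, h⟩ | ⟨n, m, h⟩)
      · rw [Prod.ext_iff] at h
        obtain ⟨h1, h2⟩ := h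
        simp only at h1 h2
        left
        have hn : u / 4 = n := by omega
        rw [hn]
        have := ha n
        omega
      · rw [Prod.ext_iff] at h
        obtain ⟨h1, h2⟩ := h
        simp only at h1 h2
        right
        have hm : v / 2 = m := by omega
        rw [hm]
        have := hb m
        omega
    · rintro (⟨h1, h2⟩ | ⟨h1, h2⟩)
      · left
        refine ⟨u / 4, v / 2, ?_⟩
        rw [Prod.ext_iff]
        constructor <;> simp <;> omega
      · right
        refine ⟨u / 4, v / 2, ?_⟩
        rw [Prod.ext_iff]
        constructor <;> simp <;> omega
  classical
  rintro ⟨x₁, x₂⟩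
  rw [Finset.sum_product, Finset.sum_pair (by norm_num : (0 : ℤ) ≠ 2)]
  simp only [Finset.sum_pair (by norm_num : (0 : ℤ) ≠ 1)]
  simp only [Prod.mk_sub_mk, Set.indicator_apply, Pi.one_apply, key, sub_zero]
  have hA1 := ha (x₁ / 4)
  have hA2 := ha ((x₁ - 2) / 4)
  have hB1 := hb (x₂ / 2)
  have hB2 := hb ((x₂ - 1) / 2)
  clear key hA ha hb
  generalize a (x₁ / 4) = A1 at hA1 ⊢
  generalize a ((x₁ - 2) / 4) = A2 at hA2 ⊢
  generalize b (x₂ / 2) = B1 at hB1 ⊢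
  generalize b ((x₂ - 1) / 2) = B2 at hB2 ⊢
  have e1 : (x₁ - 2) % 4 = (x₁ % 4 + 2) % 4 := by omega
  have e2 : (x₂ - 1) % 2 = (x₂ % 2 + 1) % 2 := by omega
  rcases (show x₁ % 4 = 0 ∨ x₁ % 4 = 1 ∨ x₁ % 4 = 2 ∨ x₁ % 4 = 3 from by omega) with h|h|h|h <;>
  rcases (show x₂ % 2 = 0 ∨ x₂ % 2 = 1 from by omega) with h'|h' <;>
  rcases hA1 with rfl|rfl <;> rcases hA2 with rfl|rfl <;> rcases hB1 with rfl|rfl <;> rcases hB2 with rfl|rfl <;>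
  simp [e1, e2, h, h']
end
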